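/- (Monodromy theorem) Let D ⊆ ℂ be a simply connected domain, a ∈ D, and let f be a function analytic in a neighborhood of a. Suppose that for every point x ∈ D and every path in D from a to x, the germ of f at a admits analytic continuation along that path. Then the continuation is independent of the path: for any two paths in D from a to x, the analytic germs at x obtained by continuation along the two paths coincide (equivalently, f extends to a single analytic function on all of D). -/

import Mathlib

/-!
By the identity theorem, a continuation along a path is determined by its initial germ: the set of
times at which two continuations agree is open and closed in `[0, 1]`. By compactness of `[0, 1]`,
the germs of a continuation along `γ` have representatives analytic on balls of one fixed radius `ε`
around the points `γ t`; this family of representatives is then also a continuation along every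
path with the same endpoints that stays `ε`-close to `γ`. Since `D` is simply connected, the two
paths are joined by a homotopy `Γ` in `D` fixing the endpoints, so the terminal germ of the
continuation along `Γ s` is a locally constant, hence constant, function of `s`.
-/

open Topology Filter

noncomputable section

/-- `ContinuesAlong f γ h` : the germ of the analytic function `f` at `γ 0` admits an analytic
continuation along the path `γ : [0,1] → ℂ`, the final germ (at `γ 1`) being that of `h`.
Concretely: there is a family `F t` of convergent power series (germs of analytic functions)
at the points `γ t`, starting at the germ of `f` and ending at the germ of `h`, each germ
being obtained locally by re-expansion of its neighbours. -/
def ContinuesAlong (f : ℂ → ℂ) (γ : ℝ → ℂ) (h : ℂ → ℂ) : Prop :=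
  ∃ F : ℝ → ℂ → ℂ,
    (∀ t ∈ Set.Icc (0 : ℝ) 1, AnalyticAt ℂ (F t) (γ t)) ∧
    F 0 =ᶠ[𝓝 (γ 0)] f ∧
    F 1 =ᶠ[𝓝 (γ 1)] h ∧
    ∀ t ∈ Set.Icc (0 : ℝ) 1, ∀ᶠ s in 𝓝 t, s ∈ Set.Icc (0 : ℝ) 1 →
      F s =ᶠ[𝓝 (γ s)] F t

open Set Metric Function

section IdentityTheorem

variable {E F : Type*} [NormedAddCommGroup E] [NormedSpace ℂ E]
  [NormedAddCommGroup F] [NormedSpace ℂ F] {f g : E → F}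

theorem AnalyticOnNhd.eventuallyEq_nhds_of_isPreconnected {U : Set E}
    (hf : AnalyticOnNhd ℂ f U) (hg : AnalyticOnNhd ℂ g U) (hUo : IsOpen U)
    (hUc : IsPreconnected U) {x y : E} (hx : x ∈ U) (hy : y ∈ U) (hxy : f =ᶠ[𝓝 x] g) :
    f =ᶠ[𝓝 y] g :=
  (hf.eqOn_of_preconnected_of_eventuallyEq hg hUc hx hxy).eventuallyEq_of_mem (hUo.mem_nhds hy)

theorem AnalyticAt.eventually_eventuallyEq_nhds_iff [CompleteSpace F] {z₀ : E}
    (hf : AnalyticAt ℂ f z₀) (hg : AnalyticAt ℂ g z₀) :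
    ∀ᶠ z in 𝓝 z₀, (f =ᶠ[𝓝 z] g ↔ f =ᶠ[𝓝 z₀] g) := by
  obtain ⟨r, hr, hball⟩ :=
    Metric.mem_nhds_iff.1 (hf.eventually_analyticAt.and hg.eventually_analyticAt)
  have hfr : AnalyticOnNhd ℂ f (ball z₀ r) := fun z hz => (hball hz).1
  have hgr : AnalyticOnNhd ℂ g (ball z₀ r) := fun z hz => (hball hz).2
  have hpropagate {x y : E} := hfr.eventuallyEq_nhds_of_isPreconnected hgr isOpen_ball
    (convex_ball z₀ r).isPreconnected (x := x) (y := y)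
  filter_upwards [ball_mem_nhds z₀ hr] with z hz
  exact ⟨hpropagate hz (mem_ball_self hr), hpropagate (mem_ball_self hr) hz⟩

end IdentityTheorem

structure IsAnalyticContinuationAlong (F : ℝ → ℂ → ℂ) (γ : ℝ → ℂ) : Prop where
  analyticAt : ∀ t ∈ Icc (0 : ℝ) 1, AnalyticAt ℂ (F t) (γ t)
  eventuallyEq : ∀ t ∈ Icc (0 : ℝ) 1, ∀ᶠ s in 𝓝[Icc 0 1] t, F s =ᶠ[𝓝 (γ s)] F t

theorem continuesAlong_iff {f h : ℂ → ℂ} {γ : ℝ → ℂ} :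
    ContinuesAlong f γ h ↔ ∃ F, IsAnalyticContinuationAlong F γ ∧
      F 0 =ᶠ[𝓝 (γ 0)] f ∧ F 1 =ᶠ[𝓝 (γ 1)] h := by
  simp only [ContinuesAlong]
  exact ⟨fun ⟨F, hF, h0, h1, hF'⟩ =>
      ⟨F, ⟨hF, fun t ht => eventually_nhdsWithin_iff.2 (hF' t ht)⟩, h0, h1⟩,
    fun ⟨F, ⟨hF, hF'⟩, h0, h1⟩ =>
      ⟨F, hF, h0, h1, fun t ht => eventually_nhdsWithin_iff.1 (hF' t ht)⟩⟩

namespace IsAnalyticContinuationAlong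

variable {F G : ℝ → ℂ → ℂ} {γ σ : ℝ → ℂ}

theorem eventuallyEq_of_eventuallyEq_zero (hF : IsAnalyticContinuationAlong F γ)
    (hG : IsAnalyticContinuationAlong G γ) (hγ : ContinuousOn γ (Icc 0 1))
    (h0 : F 0 =ᶠ[𝓝 (γ 0)] G 0) {t : ℝ} (ht : t ∈ Icc (0 : ℝ) 1) :
    F t =ᶠ[𝓝 (γ t)] G t := by
  refine isPreconnected_Icc.induction₂'
    (fun t s => F t =ᶠ[𝓝 (γ t)] G t → F s =ᶠ[𝓝 (γ s)] G s) (fun t ht => ?_)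
    (fun _ _ _ _ _ _ hts hsu => hsu ∘ hts) (left_mem_Icc.2 zero_le_one) ht h0
  have hnear := (hF.analyticAt t ht).eventually_eventuallyEq_nhds_iff (hG.analyticAt t ht)
  filter_upwards [hF.eventuallyEq t ht, hG.eventuallyEq t ht, (hγ t ht).eventually hnear]
    with s hFs hGs hs
  have : F s =ᶠ[𝓝 (γ s)] G s ↔ F t =ᶠ[𝓝 (γ t)] G t := by
    rw [← hs]
    exact ⟨fun h => hFs.symm.trans (h.trans hGs), fun h => hFs.trans (h.trans hGs.symm)⟩
  exact ⟨this.2, this.1⟩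

theorem congr (hF : IsAnalyticContinuationAlong F γ) (hγ : ContinuousOn γ (Icc 0 1))
    (hGF : ∀ t ∈ Icc (0 : ℝ) 1, G t =ᶠ[𝓝 (γ t)] F t) : IsAnalyticContinuationAlong G γ where
  analyticAt t ht := (hF.analyticAt t ht).congr (hGF t ht).symm
  eventuallyEq t ht := by
    filter_upwards [hF.eventuallyEq t ht, (hγ t ht).eventually (hGF t ht).eventuallyEq_nhds,
      self_mem_nhdsWithin] with s hFs hGFs hs
    exact (hGF s hs).trans (hFs.trans hGFs.symm)

theorem exists_pos_analyticOnNhd_ball (hF : IsAnalyticContinuationAlong F γ)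
    (hγ : ContinuousOn γ (Icc 0 1)) :
    ∃ ε > 0, ∃ G : ℝ → ℂ → ℂ, (∀ t ∈ Icc (0 : ℝ) 1, AnalyticOnNhd ℂ (G t) (ball (γ t) ε)) ∧
      ∀ t ∈ Icc (0 : ℝ) 1, G t =ᶠ[𝓝 (γ t)] F t := by
  have hsmall : ∀ᶠ ε in 𝓝 (0 : ℝ), ∀ t ∈ Icc (0 : ℝ) 1,
      ∃ ψ : ℂ → ℂ, AnalyticOnNhd ℂ ψ (ball (γ t) ε) ∧ ψ =ᶠ[𝓝 (γ t)] F t := by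
    refine (isCompact_Icc.eventually_forall_of_forall_eventually (P := fun ε s =>
      s ∈ Icc (0 : ℝ) 1 → ∃ ψ : ℂ → ℂ, AnalyticOnNhd ℂ ψ (ball (γ s) ε) ∧ ψ =ᶠ[𝓝 (γ s)] F s)
      fun t ht => ?_).mono fun ε h t ht => h t ht ht
    obtain ⟨r, hr, hFr⟩ := (hF.analyticAt t ht).exists_ball_analyticOnNhd
    have hnear : ∀ᶠ s in 𝓝 t, s ∈ Icc (0 : ℝ) 1 →
        dist (γ s) (γ t) < r / 2 ∧ F s =ᶠ[𝓝 (γ s)] F t := eventually_nhdsWithin_iff.1 <|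
      ((hγ t ht).eventually (ball_mem_nhds _ (half_pos hr))).and (hF.eventuallyEq t ht)
    rw [nhds_prod_eq]
    filter_upwards [(eventually_lt_nhds (half_pos hr)).prod_mk hnear]
      with ⟨ε, s⟩ ⟨hε, hs⟩ hsI
    obtain ⟨hγs, hFs⟩ := hs hsI
    exact ⟨F t, hFr.mono (ball_subset_ball' (by linarith)), hFs.symm⟩
  obtain ⟨δ, hδ, hδsmall⟩ := Metric.eventually_nhds_iff.1 hsmall
  choose! G hG hGF using hδsmall (y := δ / 2)
    (by rw [Real.dist_0_eq_abs, abs_of_pos (half_pos hδ)]; exact half_lt_self hδ)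
  exact ⟨δ / 2, half_pos hδ, G, hG, hGF⟩

theorem of_forall_dist_lt (hF : IsAnalyticContinuationAlong F γ) (hγ : ContinuousOn γ (Icc 0 1))
    {ε : ℝ} (hFε : ∀ t ∈ Icc (0 : ℝ) 1, AnalyticOnNhd ℂ (F t) (ball (γ t) ε))
    (hσ : ContinuousOn σ (Icc 0 1)) (hσγ : ∀ t ∈ Icc (0 : ℝ) 1, dist (σ t) (γ t) < ε) :
    IsAnalyticContinuationAlong F σ where
  analyticAt t ht := hFε t ht (σ t) (hσγ t ht)
  eventuallyEq t ht := by
    have hε : 0 < ε := dist_nonneg.trans_lt (hσγ t ht)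
    filter_upwards [hF.eventuallyEq t ht, (hγ t ht).eventually (ball_mem_nhds (γ t) hε),
      (hσ t ht).eventually (isOpen_ball.mem_nhds (hσγ t ht)), self_mem_nhdsWithin]
      with s hFs hγs hσs hs
    -- both germs extend to the convex lens `ball (γ s) ε ∩ ball (γ t) ε`, which contains `σ s`
    exact ((hFε s hs).mono inter_subset_left).eventuallyEq_nhds_of_isPreconnected
      ((hFε t ht).mono inter_subset_right) (isOpen_ball.inter isOpen_ball)
      ((convex_ball _ _).inter (convex_ball _ _)).isPreconnected
      ⟨mem_ball_self hε, hγs⟩ ⟨hσγ s hs, hσs⟩ hFs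

end IsAnalyticContinuationAlong

namespace ContinuesAlong

variable {f h h' : ℂ → ℂ} {γ σ : ℝ → ℂ}

theorem eventuallyEq (hγ : ContinuousOn γ (Icc 0 1)) (hc : ContinuesAlong f γ h)
    (hc' : ContinuesAlong f γ h') : h =ᶠ[𝓝 (γ 1)] h' := by
  obtain ⟨F, hF, hF0, hF1⟩ := continuesAlong_iff.1 hc
  obtain ⟨G, hG, hG0, hG1⟩ := continuesAlong_iff.1 hc'
  exact hF1.symm.trans ((hF.eventuallyEq_of_eventuallyEq_zero hG hγ (hF0.trans hG0.symm)
    (right_mem_Icc.2 zero_le_one)).trans hG1)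

theorem exists_forall_dist_lt (hγ : ContinuousOn γ (Icc 0 1)) (hc : ContinuesAlong f γ h) :
    ∃ ε > 0, ∀ σ : ℝ → ℂ, ContinuousOn σ (Icc 0 1) → σ 0 = γ 0 → σ 1 = γ 1 →
      (∀ t ∈ Icc (0 : ℝ) 1, dist (σ t) (γ t) < ε) → ContinuesAlong f σ h := by
  obtain ⟨F, hF, hF0, hF1⟩ := continuesAlong_iff.1 hc
  obtain ⟨ε, hε, G, hGε, hGF⟩ := hF.exists_pos_analyticOnNhd_ball hγ
  refine ⟨ε, hε, fun σ hσ hσ0 hσ1 hσγ => continuesAlong_iff.2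
    ⟨G, (hF.congr hγ hGF).of_forall_dist_lt hγ hGε hσ hσγ, ?_, ?_⟩⟩
  · rw [hσ0]
    exact (hGF 0 (left_mem_Icc.2 zero_le_one)).trans hF0
  · rw [hσ1]
    exact (hGF 1 (right_mem_Icc.2 zero_le_one)).trans hF1

theorem congr_path (hγ : ContinuousOn γ (Icc 0 1)) (hc : ContinuesAlong f γ h)
    (hσγ : EqOn σ γ (Icc 0 1)) : ContinuesAlong f σ h := by
  obtain ⟨ε, hε, hnear⟩ := hc.exists_forall_dist_lt hγ
  exact hnear σ (hγ.congr hσγ) (hσγ (left_mem_Icc.2 zero_le_one))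
    (hσγ (right_mem_Icc.2 zero_le_one)) fun t ht => by rwa [hσγ ht, dist_self]

theorem eventually_continuesAlong {Γ : ℝ → ℝ → ℂ} (hΓ : Continuous (uncurry Γ)) {a x : ℂ}
    (hΓa : ∀ s, Γ s 0 = a) (hΓx : ∀ s, Γ s 1 = x) {s₀ : ℝ} (hc : ContinuesAlong f (Γ s₀) h) :
    ∀ᶠ s in 𝓝 s₀, ContinuesAlong f (Γ s) h := by
  obtain ⟨ε, hε, hnear⟩ := hc.exists_forall_dist_lt (hΓ.uncurry_left s₀).continuousOn
  have hdist : Continuous fun p : ℝ × ℝ => dist (Γ p.1 p.2) (Γ s₀ p.2) :=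
    hΓ.dist (hΓ.comp (continuous_const.prodMk continuous_snd))
  have hclose : ∀ᶠ s in 𝓝 s₀, ∀ t ∈ Icc (0 : ℝ) 1, dist (Γ s t) (Γ s₀ t) < ε :=
    isCompact_Icc.eventually_forall_of_forall_eventually fun t _ =>
      hdist.continuousAt.eventually (gt_mem_nhds (by simpa using hε))
  filter_upwards [hclose] with s hs
  exact hnear (Γ s) (hΓ.uncurry_left s).continuousOn ((hΓa s).trans (hΓa s₀).symm)
    ((hΓx s).trans (hΓx s₀).symm) hs

end ContinuesAlong

section Homotopy

variable {X : Type*} [TopologicalSpace X] {S : Set X}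

theorem exists_path_of_continuousOn {γ : ℝ → X} (hγ : ContinuousOn γ (Icc 0 1))
    (hγS : ∀ t ∈ Icc (0 : ℝ) 1, γ t ∈ S) {x y : S} (h0 : γ 0 = x) (h1 : γ 1 = y) :
    ∃ p : Path x y, ∀ t : unitInterval, (p t : X) = γ t :=
  ⟨{ toFun := fun t => ⟨γ t, hγS t t.2⟩
     continuous_toFun := (hγ.comp_continuous continuous_subtype_val Subtype.prop).subtype_mk _
     source' := Subtype.ext h0
     target' := Subtype.ext h1 }, fun _ => rfl⟩

theorem exists_homotopy_of_simplyConnectedSpace (hS : SimplyConnectedSpace S) {γ₁ γ₂ : ℝ → X}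
    (hγ₁ : ContinuousOn γ₁ (Icc 0 1)) (hγ₂ : ContinuousOn γ₂ (Icc 0 1))
    (hγ₁S : ∀ t ∈ Icc (0 : ℝ) 1, γ₁ t ∈ S) (hγ₂S : ∀ t ∈ Icc (0 : ℝ) 1, γ₂ t ∈ S)
    (h0 : γ₁ 0 = γ₂ 0) (h1 : γ₁ 1 = γ₂ 1) :
    ∃ Γ : ℝ → ℝ → X, Continuous (uncurry Γ) ∧ (∀ s t, Γ s t ∈ S) ∧
      (∀ s, Γ s 0 = γ₁ 0) ∧ (∀ s, Γ s 1 = γ₁ 1) ∧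
      EqOn (Γ 0) γ₁ (Icc 0 1) ∧ EqOn (Γ 1) γ₂ (Icc 0 1) := by
  let x : S := ⟨γ₁ 0, hγ₁S 0 (left_mem_Icc.2 zero_le_one)⟩
  let y : S := ⟨γ₁ 1, hγ₁S 1 (right_mem_Icc.2 zero_le_one)⟩
  obtain ⟨p₁, hp₁⟩ := exists_path_of_continuousOn (x := x) (y := y) hγ₁ hγ₁S rfl rfl
  obtain ⟨p₂, hp₂⟩ := exists_path_of_continuousOn (x := x) (y := y) hγ₂ hγ₂S h0.symm h1.symm
  obtain ⟨H⟩ := SimplyConnectedSpace.paths_homotopic p₁ p₂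
  let π : ℝ → unitInterval := projIcc 0 1 zero_le_one
  refine ⟨fun s t => H (π s, π t), ?_, fun s t => (H (π s, π t)).2, fun s => ?_, fun s => ?_,
    fun t ht => ?_, fun t ht => ?_⟩
  · exact continuous_subtype_val.comp
      (H.continuous.comp (continuous_projIcc.prodMap continuous_projIcc))
  · simp [π, x]
  · simp [π, y]
  · simp [π, projIcc_of_mem _ ht, hp₁]
  · simp [π, projIcc_of_mem _ ht, hp₂]

end Homotopy

theorem monodromy_theorem_general (D : Set ℂ) (hsc : SimplyConnectedSpace D)
    (a : ℂ) (f : ℂ → ℂ)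
    (hcont : ∀ x ∈ D, ∀ γ : ℝ → ℂ, ContinuousOn γ (Set.Icc 0 1) →
      (∀ t ∈ Set.Icc (0 : ℝ) 1, γ t ∈ D) → γ 0 = a → γ 1 = x →
      ∃ h : ℂ → ℂ, ContinuesAlong f γ h) :
    ∀ x ∈ D, ∀ γ₁ γ₂ : ℝ → ℂ,
      ContinuousOn γ₁ (Set.Icc 0 1) → (∀ t ∈ Set.Icc (0 : ℝ) 1, γ₁ t ∈ D) →
      γ₁ 0 = a → γ₁ 1 = x →
      ContinuousOn γ₂ (Set.Icc 0 1) → (∀ t ∈ Set.Icc (0 : ℝ) 1, γ₂ t ∈ D) →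
      γ₂ 0 = a → γ₂ 1 = x →
      ∀ h₁ h₂ : ℂ → ℂ, ContinuesAlong f γ₁ h₁ → ContinuesAlong f γ₂ h₂ →
        h₁ =ᶠ[𝓝 x] h₂ := by
  intro x hx γ₁ γ₂ hγ₁ hγ₁D hγ₁a hγ₁x hγ₂ hγ₂D hγ₂a hγ₂x h₁ h₂ hc₁ hc₂
  obtain ⟨Γ, hΓ, hΓD, hΓ0, hΓ1, hΓγ₁, hΓγ₂⟩ := exists_homotopy_of_simplyConnectedSpace hsc
    hγ₁ hγ₂ hγ₁D hγ₂D (hγ₁a.trans hγ₂a.symm) (hγ₁x.trans hγ₂x.symm)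
  have hΓa (s : ℝ) : Γ s 0 = a := (hΓ0 s).trans hγ₁a
  have hΓx (s : ℝ) : Γ s 1 = x := (hΓ1 s).trans hγ₁x
  have hΓs (s : ℝ) : ContinuousOn (Γ s) (Icc 0 1) := (hΓ.uncurry_left s).continuousOn
  choose h hh using fun s => hcont x hx (Γ s) (hΓs s) (fun t _ => hΓD s t) (hΓa s) (hΓx s)
  have hgerm (s : ℝ) {h' : ℂ → ℂ} (hc : ContinuesAlong f (Γ s) h') : h' =ᶠ[𝓝 x] h s :=
    hΓx s ▸ hc.eventuallyEq (hΓs s) (hh s)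
  have hconst : IsLocallyConstant fun s => (h s : Germ (𝓝 x) ℂ) :=
    (IsLocallyConstant.iff_eventually_eq _).2 fun s₀ =>
      ((hh s₀).eventually_continuesAlong hΓ hΓa hΓx).mono fun s hs =>
        Germ.coe_eq.2 (hgerm s hs).symm
  calc h₁ =ᶠ[𝓝 x] h 0 := hgerm 0 (hc₁.congr_path hγ₁ hΓγ₁)
    _ =ᶠ[𝓝 x] h 1 := Germ.coe_eq.1 (hconst.apply_eq_of_preconnectedSpace 0 1)
    _ =ᶠ[𝓝 x] h₂ := (hgerm 1 (hc₂.congr_path hγ₂ hΓγ₂)).symm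

/-- **Monodromy theorem.**  Let `D ⊆ ℂ` be a simply connected domain, `a ∈ D` and `f` analytic
in a neighbourhood of `a`.  If the germ of `f` at `a` admits an analytic continuation along
every path in `D` starting at `a`, then the continuation is independent of the path: for any
two paths in `D` from `a` to a point `x`, the germs at `x` obtained by continuation along the
two paths coincide. -/
theorem monodromy_theorem (D : Set ℂ) (hD : IsOpen D) (hsc : SimplyConnectedSpace D)
    (a : ℂ) (ha : a ∈ D) (f : ℂ → ℂ) (hf : AnalyticAt ℂ f a)
    (hcont : ∀ x ∈ D, ∀ γ : ℝ → ℂ, ContinuousOn γ (Set.Icc 0 1) →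
      (∀ t ∈ Set.Icc (0 : ℝ) 1, γ t ∈ D) → γ 0 = a → γ 1 = x →
      ∃ h : ℂ → ℂ, ContinuesAlong f γ h) :
    ∀ x ∈ D, ∀ γ₁ γ₂ : ℝ → ℂ,
      ContinuousOn γ₁ (Set.Icc 0 1) → (∀ t ∈ Set.Icc (0 : ℝ) 1, γ₁ t ∈ D) →
      γ₁ 0 = a → γ₁ 1 = x →
      ContinuousOn γ₂ (Set.Icc 0 1) → (∀ t ∈ Set.Icc (0 : ℝ) 1, γ₂ t ∈ D) →
      γ₂ 0 = a → γ₂ 1 = x →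
      ∀ h₁ h₂ : ℂ → ℂ, ContinuesAlong f γ₁ h₁ → ContinuesAlong f γ₂ h₂ →
        h₁ =ᶠ[𝓝 x] h₂ :=
  monodromy_theorem_general D hsc a f hcont

end
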